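/- arXiv:1111.6782 — 3 statements merged into one kernel-verified Lean document; each statement's English description precedes it below -/
import Mathlib

section
/- Let α ∈ (2,3), β > 0, n ≥ 2, and let γ ∈ H^{(α+1)/2,2}(ℝ/ℤ,ℝⁿ) be injective and parametrized by arc-length. Then there exists a constant C < ∞, depending only on α, β and γ, such that for all s₁, τ₁, τ₂ ∈ [0,1] the function g^{α,β}_{s₁,τ₁,τ₂} belongs to L¹((ℝ/ℤ)×(−1/2,1/2), ℝⁿ) and ‖g^{α,β}_{s₁,τ₁,τ₂}‖_{L¹} ≤ C. -/
open MeasureTheory Filter Set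
open scoped RealInnerProductSpace ENNReal Topology

noncomputable section

/-- `ℝⁿ` -/
abbrev Rn (n : ℕ) := EuclideanSpace ℝ (Fin n)

variable {n : ℕ}

/-- A 1-periodic curve is injective as a map on `ℝ/ℤ`. -/
def PerInjective (γ : ℝ → Rn n) : Prop :=
  ∀ u v : ℝ, γ u = γ v → ∃ k : ℤ, v = u + k

/-- `γ` is a regular curve: `γ'(u) ≠ 0` for all `u`. -/
def RegularCurve (γ : ℝ → Rn n) : Prop := ∀ u : ℝ, deriv γ u ≠ 0

/-- `γ` is parametrized by arc-length: `|γ'(u)| = 1` for all `u`. -/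
def ArcLengthParam (γ : ℝ → Rn n) : Prop := ∀ u : ℝ, ‖deriv γ u‖ = 1

/-- The length `L(γ) = ∫₀¹ |γ'(θ)| dθ` of the closed curve `γ`. -/
def curveLen (γ : ℝ → Rn n) : ℝ := ∫ θ in (0:ℝ)..1, ‖deriv γ θ‖

/-- The arc length `L(γ|_{[u,u+w]}) = |∫_u^{u+w} |γ'(θ)| dθ|`. -/
def arcLen (γ : ℝ → Rn n) (u w : ℝ) : ℝ := |∫ θ in u..(u + w), ‖deriv γ θ‖|

/-- The intrinsic distance `d_γ(u+w,u)`. -/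
def idist (γ : ℝ → Rn n) (u w : ℝ) : ℝ :=
  min (arcLen γ u w) (curveLen γ - arcLen γ u w)

/-- The integrand of the O'Hara energy `E^α`. -/
def ohIntegrand (α : ℝ) (γ : ℝ → Rn n) (u w : ℝ) : ℝ :=
  (1 / ‖γ (u + w) - γ u‖ ^ α - 1 / idist γ u w ^ α) * ‖deriv γ (u + w)‖ * ‖deriv γ u‖

/-- The O'Hara energy `E^α`, with values in `[0,∞]`. -/
def oharaE (α : ℝ) (γ : ℝ → Rn n) : ℝ≥0∞ :=
  ∫⁻ u in Ioc (0:ℝ) 1, ∫⁻ w in Ioo (-(1:ℝ)/2) (1/2), ENNReal.ofReal (ohIntegrand α γ u w)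

/-- The O'Hara energy `E^α` as a real number. -/
def oharaER (α : ℝ) (γ : ℝ → Rn n) : ℝ := (oharaE α γ).toReal

/-- `[−1/2,−ε] ∪ [ε,1/2]`, the `w`-section of `U_ε`. -/
def Wset (ε : ℝ) : Set ℝ := Icc (-(1:ℝ)/2) (-ε) ∪ Icc ε (1/2)

/-- The truncated O'Hara energy `E^α_ε`, an integral over `U_ε`. -/
def oharaEeps (α ε : ℝ) (γ : ℝ → Rn n) : ℝ :=
  ∫ u in Ioc (0:ℝ) 1, ∫ w in Wset ε, ohIntegrand α γ u w

/-- `F` has directional (Gâteaux) derivative `d` at `γ` in direction `h`. -/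
def HasDirDeriv (F : (ℝ → Rn n) → ℝ) (γ h : ℝ → Rn n) (d : ℝ) : Prop :=
  Tendsto (fun τ : ℝ => (F (γ + τ • h) - F γ) / τ) (𝓝[≠] (0:ℝ)) (𝓝 d)

/-- Squared Gagliardo seminorm `[f]²_{H^{s,2}}` of a 1-periodic map. -/
def gagliardoSq (s : ℝ) {E : Type*} [NormedAddCommGroup E] (f : ℝ → E) : ℝ≥0∞ :=
  ∫⁻ u in Ioc (0:ℝ) 1, ∫⁻ w in Ioo (-(1:ℝ)/2) (1/2),
    ENNReal.ofReal (‖f (u + w) - f u‖ ^ 2 / |w| ^ (1 + 2 * s))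

/-- Membership in the fractional Sobolev space `H^{1+σ,2}(ℝ/ℤ,ℝⁿ)`, `σ ∈ (0,1)`:
a 1-periodic `C¹` function whose derivative has finite Gagliardo seminorm of order `σ`. -/
def MemH1 (σ : ℝ) (γ : ℝ → Rn n) : Prop :=
  Function.Periodic γ 1 ∧ ContDiff ℝ 1 γ ∧ gagliardoSq σ (deriv γ) < ⊤

/-- The norm of `H^{1+σ,2}(ℝ/ℤ,ℝⁿ)`. -/
def H1Norm (σ : ℝ) (γ : ℝ → Rn n) : ℝ :=
  Real.sqrt (∫ u in Ioc (0:ℝ) 1, (‖γ u‖ ^ 2 + ‖deriv γ u‖ ^ 2)) +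
    Real.sqrt ((gagliardoSq σ (deriv γ)).toReal)

/-- Membership of a 1-periodic map in `L²(ℝ/ℤ)`. -/
def MemL2per {E : Type*} [NormedAddCommGroup E] (f : ℝ → E) : Prop :=
  Function.Periodic f 1 ∧ AEStronglyMeasurable f (volume : Measure ℝ) ∧
    IntegrableOn (fun u => ‖f u‖ ^ 2) (Ioc (0:ℝ) 1) volume

/-- Membership in the fractional Sobolev space `H^{s,2}(ℝ/ℤ)`, `s ∈ (0,1)`. -/
def MemHs0 (s : ℝ) {E : Type*} [NormedAddCommGroup E] (f : ℝ → E) : Prop :=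
  MemL2per f ∧ gagliardoSq s f < ⊤

/-- The norm of `H^{s,2}(ℝ/ℤ)` for `s ∈ (0,1)`: `‖f‖_{L²} + [f]_{H^{s,2}}`. -/
def Hs0Norm (s : ℝ) {E : Type*} [NormedAddCommGroup E] (f : ℝ → E) : ℝ :=
  Real.sqrt (∫ u in Ioc (0:ℝ) 1, ‖f u‖ ^ 2) + Real.sqrt ((gagliardoSq s f).toReal)

/-- The `k`-th Fourier coefficient (`j`-th component) of a 1-periodic curve. -/
def fCoef (γ : ℝ → Rn n) (k : ℤ) (j : Fin n) : ℂ :=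
  ∫ u in (0:ℝ)..1, (γ u j : ℂ) * Complex.exp ((-2) * (Real.pi : ℂ) * Complex.I * (k : ℂ) * (u : ℂ))

/-- Membership in `H^{s,2}(ℝ/ℤ,ℝⁿ)` via the Fourier characterization:
`((1+|k|²)^{s/2} γ̂(k))_k ∈ ℓ²`. -/
def MemHF (s : ℝ) (γ : ℝ → Rn n) : Prop :=
  Function.Periodic γ 1 ∧ Continuous γ ∧
    Summable (fun k : ℤ => (1 + (k : ℝ) ^ 2) ^ s * ∑ j, ‖fCoef γ k j‖ ^ 2)

/-- The squared Fourier norm of `H^{s,2}(ℝ/ℤ,ℝⁿ)`. -/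
def fNormSq (s : ℝ) (γ : ℝ → Rn n) : ℝ :=
  ∑' k : ℤ, (1 + (k : ℝ) ^ 2) ^ s * ∑ j, ‖fCoef γ k j‖ ^ 2

/-- C¹-norm of a 1-periodic map. -/
def c1Norm (f : ℝ → Rn n) : ℝ := ⨆ u : Icc (0:ℝ) 1, (‖f u.1‖ + ‖deriv f u.1‖)

/-- The integrand of `Q(γ,h)`. -/
def Qintegrand (α : ℝ) (γ h : ℝ → Rn n) (u w : ℝ) : ℝ :=
  ⟪deriv γ u, deriv h u⟫ / |w| ^ α
    - ⟪γ (u + w) - γ u, h (u + w) - h u⟫ / |w| ^ (α + 2)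

/-- The integrand of `R(γ,h)`. -/
def Rintegrand (α : ℝ) (γ h : ℝ → Rn n) (u w : ℝ) : ℝ :=
  2 * ⟪deriv γ u, deriv h u⟫ * (1 / ‖γ (u + w) - γ u‖ ^ α - 1 / |w| ^ α)
    - α * ⟪γ (u + w) - γ u, h (u + w) - h u⟫ *
        (1 / ‖γ (u + w) - γ u‖ ^ (α + 2) - 1 / |w| ^ (α + 2))

/-- `R(γ,h)`, an absolutely convergent double integral over `(ℝ/ℤ) × [−1/2,1/2]`. -/
def Rval (α : ℝ) (γ h : ℝ → Rn n) : ℝ :=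
  ∫ p in (Ioc (0:ℝ) 1) ×ˢ (Icc (-(1:ℝ)/2) (1/2)), Rintegrand α γ h p.1 p.2

/-- `G^β(z)`, the analytic factor, extended by its limiting value `β/4` at `|z| = 1`. -/
def Gbeta {n : ℕ} (β : ℝ) (z : Rn n) : ℝ :=
  if ‖z‖ = 1 then β / 4
  else (1 - ‖z‖ ^ β) / (2 * ‖z‖ ^ β * (1 - ‖z‖ ^ 2))

/-- The function `g^{α,β}_{s₁,τ₁,τ₂}(u,w)`. -/
def gfun {n : ℕ} (α β s₁ τ₁ τ₂ : ℝ) (γ : ℝ → Rn n) (u w : ℝ) : Rn n :=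
  (Gbeta β (w⁻¹ • (γ (u + w) - γ u)) *
      (‖deriv γ (u + τ₁ * w) - deriv γ (u + τ₂ * w)‖ ^ 2 / |w| ^ α)) •
    deriv γ (u + s₁ * w)

/-!
On `[0,1] × [-1/2,1/2]` the difference quotient `(γ(u+w) - γ(u))/w` has norm in `[c, 1]` for
some `c > 0` (arc length and injectivity), and there `G^β` is bounded; as `|γ'| = 1`, this gives
`|g| ≤ M |γ'(u+τ₁w) - γ'(u+τ₂w)|² / |w|^α`. Integrating first in `u`, periodicity turns the
right-hand side into `A((τ₁-τ₂)w) / |w|^α` with `A(t) = ∫ |γ'(u+t) - γ'(u)|² du`, and the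
substitution `t = (τ₁-τ₂)w` bounds its integral by `|τ₁-τ₂|^(α-1) ≤ 1` times the squared
Gagliardo seminorm of `γ'` of order `(α-1)/2`, which is finite.
-/

theorem Function.Periodic.setLIntegral_Ioc_comp_add {T : ℝ} (hT : 0 < T) {g : ℝ → ℝ≥0∞}
    (hg : Function.Periodic g T) (c : ℝ) :
    ∫⁻ u in Ioc 0 T, g (u + c) = ∫⁻ u in Ioc 0 T, g u := by
  have := Fact.mk hT
  have hcircle : ∀ t : ℝ, ∫⁻ u in Ioc t (t + T), g u = ∫⁻ b : AddCircle T, hg.lift b := fun t => by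
    rw [← AddCircle.lintegral_preimage T t hg.lift]
    exact setLIntegral_congr_fun measurableSet_Ioc fun x _ => (hg.lift_coe x).symm
  have hshift := (measurePreserving_add_right volume c).setLIntegral_comp_preimage_emb
    (measurableEmbedding_addRight c) g (Ioc c (c + T))
  rw [preimage_add_const_Ioc, sub_self, add_sub_cancel_left] at hshift
  simpa using (hshift.trans (hcircle c)).trans (hcircle 0).symm

theorem Function.Periodic.deriv {F : Type*} [NormedAddCommGroup F] [NormedSpace ℝ F]
    {f : ℝ → F} {c : ℝ} (hf : Function.Periodic f c) : Function.Periodic (deriv f) c :=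
  fun x => by rw [← deriv_comp_add_const, hf.funext]

theorem lintegral_comp_mul_left_real (H : ℝ → ℝ≥0∞) {l : ℝ} (hl : l ≠ 0) :
    ∫⁻ w, H (l * w) = ENNReal.ofReal |l⁻¹| * ∫⁻ t, H t := by
  rw [← (measurableEmbedding_mulLeft₀ hl).lintegral_map, Real.map_volume_mul_left hl,
    lintegral_smul_measure, smul_eq_mul]

theorem setLIntegral_comp_mul_left_le {s : Set ℝ} (hs : MeasurableSet s) (H : ℝ → ℝ≥0∞)
    {l : ℝ} (hl : l ≠ 0) (hls : ∀ w ∈ s, l * w ∈ s) :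
    ∫⁻ w in s, H (l * w) ≤ ENNReal.ofReal |l⁻¹| * ∫⁻ t in s, H t := by
  calc ∫⁻ w in s, H (l * w) = ∫⁻ w in s, s.indicator H (l * w) :=
        setLIntegral_congr_fun hs fun w hw => (indicator_of_mem (hls w hw) H).symm
    _ ≤ ∫⁻ w, s.indicator H (l * w) := setLIntegral_le_lintegral s _
    _ = ENNReal.ofReal |l⁻¹| * ∫⁻ t in s, H t := by
        rw [lintegral_comp_mul_left_real _ hl, lintegral_indicator hs]

/-- The substitution `t = l w` produces the factor `|l| ^ (α - 1) ≤ 1`. -/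
theorem setLIntegral_rpow_weight_comp_mul_left_le {s : Set ℝ} (hs : MeasurableSet s) {α : ℝ}
    (hα : 1 ≤ α) {A : ℝ → ℝ≥0∞} (hA : A 0 = 0) {l : ℝ} (hl : |l| ≤ 1)
    (hls : ∀ w ∈ s, l * w ∈ s) :
    ∫⁻ w in s, ENNReal.ofReal (|w| ^ α)⁻¹ * A (l * w)
      ≤ ∫⁻ w in s, ENNReal.ofReal (|w| ^ α)⁻¹ * A w := by
  rcases eq_or_ne l 0 with rfl | hl0
  · simp [hA]
  have hlpos : 0 < |l| := abs_pos.mpr hl0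
  set H : ℝ → ℝ≥0∞ := fun t => ENNReal.ofReal (|t| ^ α)⁻¹ * A t
  have hweight : ∀ w, ENNReal.ofReal (|w| ^ α)⁻¹ * A (l * w)
      = ENNReal.ofReal (|l| ^ α) * H (l * w) := fun w => by
    rcases eq_or_ne w 0 with rfl | hw
    · simp [H, hA]
    rw [← mul_assoc, ← ENNReal.ofReal_mul (by positivity), abs_mul,
      Real.mul_rpow (abs_nonneg l) (abs_nonneg w), mul_inv,
      mul_inv_cancel_left₀ (Real.rpow_pos_of_pos hlpos α).ne']
  have hfactor : |l| ^ α * |l⁻¹| ≤ 1 := by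
    rw [abs_inv, ← Real.rpow_neg_one, ← Real.rpow_add hlpos]
    exact Real.rpow_le_one (abs_nonneg l) hl (by linarith)
  calc ∫⁻ w in s, ENNReal.ofReal (|w| ^ α)⁻¹ * A (l * w)
      = ENNReal.ofReal (|l| ^ α) * ∫⁻ w in s, H (l * w) := by
        simp_rw [hweight]; exact lintegral_const_mul' _ _ ENNReal.ofReal_ne_top
    _ ≤ ENNReal.ofReal (|l| ^ α) * (ENNReal.ofReal |l⁻¹| * ∫⁻ t in s, H t) := by
        gcongr; exact setLIntegral_comp_mul_left_le hs H hl0 hls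
    _ = ENNReal.ofReal (|l| ^ α * |l⁻¹|) * ∫⁻ t in s, H t := by
        rw [← mul_assoc, ENNReal.ofReal_mul (by positivity)]
    _ ≤ ∫⁻ t in s, H t := mul_le_of_le_one_left' (ENNReal.ofReal_le_one.mpr hfactor)

theorem integrableOn_and_integral_norm_le_of_norm_le_mul {X F : Type*} [MeasurableSpace X]
    [NormedAddCommGroup F] {μ : Measure X} {S : Set X} (hS : MeasurableSet S) {g : X → F}
    (hg : AEStronglyMeasurable g (μ.restrict S)) {M : ℝ} (hM : 0 ≤ M) {q : X → ℝ}
    (hgq : ∀ x ∈ S, ‖g x‖ ≤ M * q x) {K : ℝ≥0∞} (hqK : ∫⁻ x in S, ENNReal.ofReal (q x) ∂μ ≤ K)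
    (hK : K < ⊤) :
    IntegrableOn g S μ ∧ ∫ x in S, ‖g x‖ ∂μ ≤ M * K.toReal := by
  have hbound : ∫⁻ x in S, ENNReal.ofReal ‖g x‖ ∂μ ≤ ENNReal.ofReal M * K :=
    calc ∫⁻ x in S, ENNReal.ofReal ‖g x‖ ∂μ
        ≤ ∫⁻ x in S, ENNReal.ofReal M * ENNReal.ofReal (q x) ∂μ :=
          setLIntegral_mono' hS fun x hx => by
            rw [← ENNReal.ofReal_mul hM]; exact ENNReal.ofReal_le_ofReal (hgq x hx)
      _ = ENNReal.ofReal M * ∫⁻ x in S, ENNReal.ofReal (q x) ∂μ :=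
          lintegral_const_mul' _ _ ENNReal.ofReal_ne_top
      _ ≤ ENNReal.ofReal M * K := by gcongr
  have hfin : ENNReal.ofReal M * K ≠ ⊤ := ENNReal.mul_ne_top ENNReal.ofReal_ne_top hK.ne
  have hint : IntegrableOn g S μ :=
    ⟨hg, by simpa only [HasFiniteIntegral, ofReal_norm] using hbound.trans_lt hfin.lt_top⟩
  refine ⟨hint, ?_⟩
  rw [integral_eq_lintegral_of_nonneg_ae (ae_of_all _ fun x => norm_nonneg _) hg.norm,
    ← ENNReal.toReal_ofReal hM, ← ENNReal.toReal_mul]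
  exact ENNReal.toReal_mono hfin hbound

section Curve

variable {E : Type*} [NormedAddCommGroup E] [NormedSpace ℝ E] [CompleteSpace E]

theorem inv_smul_sub_eq_integral_deriv {γ : ℝ → E} (hγ : ContDiff ℝ 1 γ) (u : ℝ) {w : ℝ}
    (hw : w ≠ 0) : w⁻¹ • (γ (u + w) - γ u) = ∫ τ in (0:ℝ)..1, deriv γ (u + τ * w) := by
  have hftc : γ (u + w) - γ u = ∫ θ in u..u + w, deriv γ θ :=
    (intervalIntegral.integral_deriv_eq_sub
      (fun x _ => (hγ.differentiable one_ne_zero).differentiableAt)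
      ((hγ.continuous_deriv le_rfl).intervalIntegrable _ _)).symm
  have hsubst := intervalIntegral.integral_comp_mul_add (a := 0) (b := 1) (deriv γ) hw u
  simp only [mul_zero, zero_add, mul_one] at hsubst
  rw [add_comm w u] at hsubst
  rw [hftc, ← hsubst]
  simp_rw [mul_comm w, add_comm _ u]

theorem norm_inv_smul_sub_le_one {γ : ℝ → E} (hγ : ContDiff ℝ 1 γ)
    (hγ' : ∀ u, ‖deriv γ u‖ ≤ 1) (u w : ℝ) : ‖w⁻¹ • (γ (u + w) - γ u)‖ ≤ 1 := by
  rcases eq_or_ne w 0 with rfl | hw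
  · simp
  rw [inv_smul_sub_eq_integral_deriv hγ u hw]
  simpa using intervalIntegral.norm_integral_le_of_norm_le_const (a := 0) (b := 1)
    fun τ _ => hγ' (u + τ * w)

end Curve

/-- The continuous extension `∫₀¹ γ'(u + τ w) dτ` of the difference quotient does not vanish on the
compact set `[0,1] × [-1/2,1/2]`: at `w = 0` it is `γ'(u)`, elsewhere use injectivity. -/
theorem exists_pos_le_norm_inv_smul_sub {n : ℕ} {γ : ℝ → Rn n} (hγ : ContDiff ℝ 1 γ)
    (hinj : PerInjective γ) (harc : ArcLengthParam γ) :
    ∃ c > 0, ∀ u ∈ Icc (0:ℝ) 1, ∀ w ∈ Icc (-(1:ℝ)/2) (1/2), w ≠ 0 →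
      c ≤ ‖w⁻¹ • (γ (u + w) - γ u)‖ := by
  set F : ℝ × ℝ → ℝ := fun p => ‖∫ τ in (0:ℝ)..1, deriv γ (p.1 + τ * p.2)‖
  have hF : Continuous F := by
    apply Continuous.norm
    apply intervalIntegral.continuous_parametric_intervalIntegral_of_continuous'
    exact (hγ.continuous_deriv le_rfl).comp (by fun_prop)
  set K : Set (ℝ × ℝ) := Icc (0:ℝ) 1 ×ˢ Icc (-(1:ℝ)/2) (1/2)
  have hK : IsCompact K := isCompact_Icc.prod isCompact_Icc
  obtain ⟨p, hpK, hmin⟩ := hK.exists_isMinOn ⟨(0, 0), by norm_num [K]⟩ hF.continuousOn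
  refine ⟨F p, ?_, fun u hu w hw hw0 => ?_⟩
  · rcases eq_or_ne p.2 0 with h0 | h0
    · simp [F, h0, harc p.1]
    have hp2 : |p.2| ≤ 1/2 := abs_le.mpr ⟨by linarith [hpK.2.1], hpK.2.2⟩
    simp only [F, ← inv_smul_sub_eq_integral_deriv hγ p.1 h0, norm_pos_iff, ne_eq,
      smul_eq_zero, inv_eq_zero, h0, false_or, sub_eq_zero]
    intro heq
    obtain ⟨k, hk⟩ := hinj _ _ heq.symm
    have hk0 : k ≠ 0 := by rintro rfl; simp at hk; exact h0 hk
    have : (1:ℝ) ≤ |(k:ℝ)| := by exact_mod_cast Int.one_le_abs hk0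
    rw [show p.2 = k by linarith] at hp2
    linarith
  · rw [inv_smul_sub_eq_integral_deriv hγ u hw0]
    exact isMinOn_iff.mp hmin (u, w) (mk_mem_prod hu hw)

theorem abs_Gbeta_le {n : ℕ} {β c : ℝ} (hβ : 0 < β) (hc : 0 < c) {z : Rn n}
    (hcz : c ≤ ‖z‖) (hz : ‖z‖ ≤ 1) :
    |Gbeta β z| ≤ max (β / 4) (max β 1 / (2 * c ^ β)) := by
  unfold Gbeta
  set t := ‖z‖
  split_ifs with ht1
  · rw [abs_of_pos (by positivity)]; exact le_max_left _ _
  refine le_max_of_le_right ?_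
  have ht : t < 1 := lt_of_le_of_ne hz ht1
  have ht0 : 0 < t := hc.trans_le hcz
  have hcβ : c ^ β ≤ t ^ β := Real.rpow_le_rpow hc.le hcz hβ.le
  have htβ : t ^ β ≤ 1 := Real.rpow_le_one ht0.le hz hβ.le
  have hcβ0 : 0 < c ^ β := Real.rpow_pos_of_pos hc β
  -- Bernoulli for `β ≥ 1`, monotonicity of `t ↦ t ^ β` on `[0,1]` for `β < 1`
  have hnum : 1 - t ^ β ≤ max β 1 * (1 - t) := by
    rcases le_or_gt 1 β with hb | hb
    · have := one_add_mul_self_le_rpow_one_add (s := t - 1) (by linarith) hb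
      rw [add_sub_cancel] at this
      nlinarith [le_max_left β 1]
    · have : t ≤ t ^ β := by
        simpa using Real.rpow_le_rpow_of_exponent_ge ht0 hz hb.le
      nlinarith [le_max_right β 1]
  have hden : 2 * c ^ β * (1 - t) ≤ 2 * t ^ β * (1 - t ^ 2) := by
    nlinarith [mul_nonneg (sub_nonneg.mpr hcβ) (sub_nonneg.mpr ht.le),
      mul_nonneg (mul_nonneg hcβ0.le ht0.le) (sub_nonneg.mpr ht.le)]
  have hden0 : 0 < 2 * c ^ β * (1 - t) := by have := sub_pos.mpr ht; positivity
  rw [abs_of_nonneg (div_nonneg (by linarith) (hden0.trans_le hden).le)]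
  calc (1 - t ^ β) / (2 * t ^ β * (1 - t ^ 2))
      ≤ max β 1 * (1 - t) / (2 * c ^ β * (1 - t)) :=
        div_le_div₀ (by have := sub_pos.mpr ht; positivity) hnum hden0 hden
    _ = max β 1 / (2 * c ^ β) := mul_div_mul_right _ _ (sub_pos.mpr ht).ne'

section Gagliardo

variable {E : Type*} [NormedAddCommGroup E] {f : ℝ → E}

theorem setLIntegral_Ioc_sq_norm_sub_div (hf : Function.Periodic f 1) (x y r : ℝ) :
    ∫⁻ u in Ioc (0:ℝ) 1, ENNReal.ofReal (‖f (u + x) - f (u + y)‖ ^ 2 / r)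
      = ENNReal.ofReal r⁻¹ * ∫⁻ u in Ioc (0:ℝ) 1, ENNReal.ofReal (‖f (u + (x - y)) - f u‖ ^ 2) := by
  have hshift : Function.Periodic (fun u => ENNReal.ofReal (‖f (u + (x - y)) - f u‖ ^ 2)) 1 :=
    fun u => by simp only [add_right_comm u 1, hf _]
  simp_rw [div_eq_mul_inv, ENNReal.ofReal_mul (sq_nonneg _)]
  rw [lintegral_mul_const' _ _ ENNReal.ofReal_ne_top, mul_comm,
    ← hshift.setLIntegral_Ioc_comp_add one_pos y]
  simp only [add_assoc, add_sub_cancel]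

theorem mul_mem_Ioo_neg_half_half {l w : ℝ} (hl : |l| ≤ 1) (hw : w ∈ Ioo (-(1:ℝ)/2) (1/2)) :
    l * w ∈ Ioo (-(1:ℝ)/2) (1/2) := by
  have hlw : |l * w| < 1/2 := by
    rw [abs_mul]
    exact (mul_le_of_le_one_left (abs_nonneg w) hl).trans_lt
      (abs_lt.mpr ⟨by linarith [hw.1], hw.2⟩)
  exact ⟨by linarith [(abs_lt.mp hlw).1], (abs_lt.mp hlw).2⟩

theorem setLIntegral_sq_norm_sub_div_rpow_le_gagliardoSq (hf : Continuous f)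
    (hper : Function.Periodic f 1) {α : ℝ} (hα : 1 ≤ α) {τ₁ τ₂ : ℝ} (hτ₁ : τ₁ ∈ Icc (0:ℝ) 1)
    (hτ₂ : τ₂ ∈ Icc (0:ℝ) 1) :
    ∫⁻ p in Ioc (0:ℝ) 1 ×ˢ Ioo (-(1:ℝ)/2) (1/2),
        ENNReal.ofReal (‖f (p.1 + τ₁ * p.2) - f (p.1 + τ₂ * p.2)‖ ^ 2 / |p.2| ^ α)
      ≤ gagliardoSq ((α - 1) / 2) f := by
  set A : ℝ → ℝ≥0∞ := fun t => ∫⁻ u in Ioc (0:ℝ) 1, ENNReal.ofReal (‖f (u + t) - f u‖ ^ 2)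
  set Φ : ℝ → ℝ → ℝ × ℝ → ℝ≥0∞ := fun a b p =>
    ENNReal.ofReal (‖f (p.1 + a * p.2) - f (p.1 + b * p.2)‖ ^ 2 / |p.2| ^ α)
  have hΦ : ∀ a b, Measurable (Φ a b) := fun a b =>
    ENNReal.measurable_ofReal.comp
      ((by fun_prop : Continuous fun p : ℝ × ℝ =>
        ‖f (p.1 + a * p.2) - f (p.1 + b * p.2)‖ ^ 2).measurable.div (by fun_prop))
  have hiter : ∀ a b, ∫⁻ p in Ioc (0:ℝ) 1 ×ˢ Ioo (-(1:ℝ)/2) (1/2), Φ a b p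
      = ∫⁻ w in Ioo (-(1:ℝ)/2) (1/2), ENNReal.ofReal (|w| ^ α)⁻¹ * A ((a - b) * w) := by
    intro a b
    rw [Measure.volume_eq_prod, setLIntegral_prod_symm _ (hΦ a b).aemeasurable]
    refine setLIntegral_congr_fun measurableSet_Ioo fun w _ => ?_
    simp only [Φ]
    rw [setLIntegral_Ioc_sq_norm_sub_div hper, sub_mul]
  have hgag : gagliardoSq ((α - 1) / 2) f
      = ∫⁻ p in Ioc (0:ℝ) 1 ×ˢ Ioo (-(1:ℝ)/2) (1/2), Φ 1 0 p := by
    rw [Measure.volume_eq_prod, setLIntegral_prod _ (hΦ 1 0).aemeasurable, gagliardoSq,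
      show 1 + 2 * ((α - 1) / 2) = α by ring]
    simp only [Φ, one_mul, zero_mul, add_zero]
  rw [hgag, hiter, hiter, sub_zero]
  simp_rw [one_mul]
  have hl : |τ₁ - τ₂| ≤ 1 := abs_le.mpr ⟨by linarith [hτ₁.1, hτ₂.2], by linarith [hτ₁.2, hτ₂.1]⟩
  exact setLIntegral_rpow_weight_comp_mul_left_le measurableSet_Ioo hα (by simp [A]) hl
    fun w hw => mul_mem_Ioo_neg_half_half hl hw

end Gagliardo

theorem measurable_Gbeta {n : ℕ} (β : ℝ) : Measurable (Gbeta (n := n) β) := by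
  unfold Gbeta
  exact Measurable.ite (measurableSet_eq_fun measurable_norm measurable_const) measurable_const
    (by fun_prop)

theorem measurable_gfun {n : ℕ} {γ : ℝ → Rn n} (hγ : Continuous γ) (hγ' : Continuous (deriv γ))
    (α β s₁ τ₁ τ₂ : ℝ) : Measurable fun p : ℝ × ℝ => gfun α β s₁ τ₁ τ₂ γ p.1 p.2 := by
  unfold gfun
  have := measurable_Gbeta (n := n) β
  have := hγ'.measurable
  fun_prop

theorem norm_gfun_le {n : ℕ} {γ : ℝ → Rn n} (harc : ArcLengthParam γ) {α β s₁ τ₁ τ₂ M u w : ℝ}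
    (hG : |Gbeta β (w⁻¹ • (γ (u + w) - γ u))| ≤ M) :
    ‖gfun α β s₁ τ₁ τ₂ γ u w‖
      ≤ M * (‖deriv γ (u + τ₁ * w) - deriv γ (u + τ₂ * w)‖ ^ 2 / |w| ^ α) := by
  rw [gfun, norm_smul, harc, mul_one, norm_mul, Real.norm_eq_abs,
    Real.norm_of_nonneg (by positivity)]
  gcongr

theorem statement14_general {n : ℕ} {α β : ℝ} (hα : α ∈ Ioo (2:ℝ) 3) (hβ : 0 < β)
    {γ : ℝ → Rn n} (hγ : MemH1 ((α - 1) / 2) γ) (hinj : PerInjective γ)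
    (harc : ArcLengthParam γ) :
    ∃ C : ℝ, ∀ s₁ ∈ Icc (0:ℝ) 1, ∀ τ₁ ∈ Icc (0:ℝ) 1, ∀ τ₂ ∈ Icc (0:ℝ) 1,
      IntegrableOn (fun p : ℝ × ℝ => gfun α β s₁ τ₁ τ₂ γ p.1 p.2)
        ((Ioc (0:ℝ) 1) ×ˢ (Ioo (-(1:ℝ)/2) (1/2))) volume ∧
      (∫ p in (Ioc (0:ℝ) 1) ×ˢ (Ioo (-(1:ℝ)/2) (1/2)), ‖gfun α β s₁ τ₁ τ₂ γ p.1 p.2‖)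
        ≤ C := by
  obtain ⟨hper, hC1, hgag⟩ := hγ
  have hγ' : Continuous (deriv γ) := hC1.continuous_deriv le_rfl
  obtain ⟨c, hc, hlow⟩ := exists_pos_le_norm_inv_smul_sub hC1 hinj harc
  set M := max (β / 4) (max β 1 / (2 * c ^ β))
  have hM : 0 ≤ M := le_max_of_le_left (by positivity)
  have hG : ∀ p ∈ Ioc (0:ℝ) 1 ×ˢ Ioo (-(1:ℝ)/2) (1/2),
      |Gbeta β ((p.2)⁻¹ • (γ (p.1 + p.2) - γ p.1))| ≤ M := by
    rintro ⟨u, w⟩ ⟨hu, hw⟩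
    rcases eq_or_ne w 0 with rfl | hw0
    -- `Gbeta β 0 = 1 / 0 = 0`
    · simpa [Gbeta, Real.zero_rpow hβ.ne'] using hM
    exact abs_Gbeta_le hβ hc (hlow u (Ioc_subset_Icc_self hu) w (Ioo_subset_Icc_self hw) hw0)
      (norm_inv_smul_sub_le_one hC1 (fun u => (harc u).le) u w)
  refine ⟨M * (gagliardoSq ((α - 1) / 2) (deriv γ)).toReal, fun s₁ _ τ₁ hτ₁ τ₂ hτ₂ => ?_⟩
  exact integrableOn_and_integral_norm_le_of_norm_le_mul (measurableSet_Ioc.prod measurableSet_Ioo)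
    (measurable_gfun hC1.continuous hγ' α β s₁ τ₁ τ₂).aestronglyMeasurable hM
    (fun p hp => norm_gfun_le harc (hG p hp))
    (setLIntegral_sq_norm_sub_div_rpow_le_gagliardoSq hγ' hper.deriv (by linarith [hα.1]) hτ₁ hτ₂)
    hgag

/-- For `α ∈ (2,3)`, `β > 0` and an injective arc-length curve
`γ ∈ H^{(α+1)/2,2}`, the functions `g^{α,β}_{s₁,τ₁,τ₂}` lie in `L¹((ℝ/ℤ)×(−1/2,1/2),ℝⁿ)` with
a uniform bound on their `L¹`-norms. -/
theorem statement14 {n : ℕ} (hn : 2 ≤ n) {α β : ℝ} (hα : α ∈ Ioo (2:ℝ) 3) (hβ : 0 < β)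
    {γ : ℝ → Rn n} (hγ : MemH1 ((α - 1) / 2) γ) (hinj : PerInjective γ)
    (harc : ArcLengthParam γ) :
    ∃ C : ℝ, ∀ s₁ ∈ Icc (0:ℝ) 1, ∀ τ₁ ∈ Icc (0:ℝ) 1, ∀ τ₂ ∈ Icc (0:ℝ) 1,
      IntegrableOn (fun p : ℝ × ℝ => gfun α β s₁ τ₁ τ₂ γ p.1 p.2)
        ((Ioc (0:ℝ) 1) ×ˢ (Ioo (-(1:ℝ)/2) (1/2))) volume ∧
      (∫ p in (Ioc (0:ℝ) 1) ×ˢ (Ioo (-(1:ℝ)/2) (1/2)), ‖gfun α β s₁ τ₁ τ₂ γ p.1 p.2‖)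
        ≤ C :=
  statement14_general hα hβ hγ hinj harc

end
end

section
/- Let s ∈ (0,1) and f ∈ L²(ℝ/ℤ,ℝⁿ) with [f]_{H^{s,2}} < ∞. Then for all τ₁, τ₂ ∈ [0,1]: ∫_{−1/2}^{1/2} ( ∫_{ℝ/ℤ} |f(u+τ₁w) − f(u+τ₂w)|² du ) / |w|^{1+2s} dw ≤ |τ₁−τ₂|^{2s} · [f]²_{H^{s,2}}. -/
open MeasureTheory Filter Set
open scoped RealInnerProductSpace ENNReal Topology

noncomputable section

variable {n : ℕ}

/-! By periodicity, the inner integral on the left depends only on the shift `(τ₁ - τ₂) w`: it is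
the squared `L²` distance `l2ShiftSq f ((τ₁ - τ₂) w)` between `f` and its translate. Substituting
`w' = (τ₁ - τ₂) w` turns the left side into `|τ₁ - τ₂| ^ (2s)` times the integral of
`l2ShiftSq f w' / |w'| ^ (1 + 2s)` over `|w'| < |τ₁ - τ₂| / 2 ≤ 1 / 2`, and by Tonelli the integral
over all `|w'| < 1 / 2` is the squared Gagliardo seminorm. -/

theorem Function.Periodic.setLIntegral_Ioc_comp_add_right {g : ℝ → ℝ≥0∞} {T : ℝ}
    (hg : Function.Periodic g T) (hT : 0 < T) (c : ℝ) :
    ∫⁻ u in Ioc 0 T, g (u + c) = ∫⁻ u in Ioc 0 T, g u := by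
  have hpre : (· + c) ⁻¹' Ioc c (c + T) = Ioc 0 T := by
    ext x
    simp only [mem_preimage, mem_Ioc]
    constructor <;> rintro ⟨h₁, h₂⟩ <;> constructor <;> linarith
  calc ∫⁻ u in Ioc 0 T, g (u + c)
      = ∫⁻ u in Ioc c (c + T), g u := by
        rw [← hpre, (measurePreserving_add_right volume c).setLIntegral_comp_preimage_emb
          (measurableEmbedding_addRight c)]
    _ = ∫⁻ u in Ioc 0 (0 + T), g u :=
        (isAddFundamentalDomain_Ioc hT c volume).setLIntegral_eq
          (isAddFundamentalDomain_Ioc hT 0 volume) g hg.map_vadd_zmultiples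
    _ = ∫⁻ u in Ioc 0 T, g u := by rw [zero_add]

theorem setLIntegral_preimage_comp_mul_left (F : ℝ → ℝ≥0∞) {τ : ℝ} (hτ : τ ≠ 0) (t : Set ℝ) :
    ∫⁻ w in (τ * ·) ⁻¹' t, F (τ * w) = ENNReal.ofReal |τ⁻¹| * ∫⁻ w in t, F w := by
  have hemb : MeasurableEmbedding (τ * ·) := (Homeomorph.mulLeft₀ τ hτ).measurableEmbedding
  rw [← hemb.lintegral_map, ← hemb.restrict_map, Real.map_volume_mul_left hτ,
    Measure.restrict_smul, lintegral_smul_measure, smul_eq_mul]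

theorem lintegral_comp_mul_div_rpow_le {G : ℝ → ℝ≥0∞} (hG : G 0 = 0) {τ : ℝ} (hτ : |τ| ≤ 1)
    (p : ℝ) :
    ∫⁻ w in Ioo (-(1:ℝ)/2) (1/2), G (τ * w) / ENNReal.ofReal (|w| ^ p)
      ≤ ENNReal.ofReal (|τ| ^ (p - 1)) *
        ∫⁻ w in Ioo (-(1:ℝ)/2) (1/2), G w / ENNReal.ofReal (|w| ^ p) := by
  rcases eq_or_ne τ 0 with rfl | hτ0
  · simp [hG]
  have habs : 0 < |τ| := abs_pos.2 hτ0
  set I := Ioo (-(1:ℝ)/2) (1/2)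
  have hI : ∀ w, w ∈ I ↔ |w| < 1/2 := fun w => by rw [abs_lt, ← neg_div]; rfl
  have hsub : I ⊆ (τ * ·) ⁻¹' I := fun w hw => by
    rw [mem_preimage, hI, abs_mul]
    exact (mul_le_of_le_one_left (abs_nonneg w) hτ).trans_lt ((hI w).1 hw)
  have hhom : ∀ w, G (τ * w) / ENNReal.ofReal (|w| ^ p)
      = ENNReal.ofReal (|τ| ^ p) * (G (τ * w) / ENNReal.ofReal (|τ * w| ^ p)) := fun w => by
    rcases eq_or_ne w 0 with rfl | hw
    · simp [hG]
    rw [abs_mul, Real.mul_rpow (abs_nonneg _) (abs_nonneg _),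
      ENNReal.ofReal_mul (Real.rpow_nonneg (abs_nonneg _) _), ← mul_div_assoc,
      ENNReal.mul_div_mul_left _ _ (ENNReal.ofReal_pos.2 (Real.rpow_pos_of_pos habs _)).ne'
        ENNReal.ofReal_ne_top]
  calc ∫⁻ w in I, G (τ * w) / ENNReal.ofReal (|w| ^ p)
      = ENNReal.ofReal (|τ| ^ p) * ∫⁻ w in I, G (τ * w) / ENNReal.ofReal (|τ * w| ^ p) := by
        simp_rw [hhom]
        exact lintegral_const_mul' _ _ ENNReal.ofReal_ne_top
    _ ≤ ENNReal.ofReal (|τ| ^ p) *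
          ∫⁻ w in (τ * ·) ⁻¹' I, G (τ * w) / ENNReal.ofReal (|τ * w| ^ p) := by
        gcongr
    _ = ENNReal.ofReal (|τ| ^ p) * (ENNReal.ofReal |τ⁻¹| *
          ∫⁻ w in I, G w / ENNReal.ofReal (|w| ^ p)) := by
        rw [setLIntegral_preimage_comp_mul_left (fun w => G w / ENNReal.ofReal (|w| ^ p)) hτ0]
    _ = ENNReal.ofReal (|τ| ^ (p - 1)) * ∫⁻ w in I, G w / ENNReal.ofReal (|w| ^ p) := by
        rw [← mul_assoc, ← ENNReal.ofReal_mul (Real.rpow_nonneg (abs_nonneg _) _), abs_inv,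
          ← div_eq_mul_inv, Real.rpow_sub_one habs.ne']

section L2Shift

variable {E : Type*} [NormedAddCommGroup E]

def l2ShiftSq (f : ℝ → E) (t : ℝ) : ℝ≥0∞ :=
  ∫⁻ u in Ioc (0:ℝ) 1, ENNReal.ofReal (‖f (u + t) - f u‖ ^ 2)

@[simp]
theorem l2ShiftSq_zero (f : ℝ → E) : l2ShiftSq f 0 = 0 := by
  simp [l2ShiftSq]

theorem lintegral_Ioc_norm_sub_sq_eq_l2ShiftSq {f : ℝ → E} (hf : Function.Periodic f 1)
    (a b : ℝ) :
    ∫⁻ u in Ioc (0:ℝ) 1, ENNReal.ofReal (‖f (u + a) - f (u + b)‖ ^ 2) = l2ShiftSq f (a - b) := by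
  have hper : Function.Periodic (fun u => ENNReal.ofReal (‖f (u + (a - b)) - f u‖ ^ 2)) 1 :=
    fun u => by simp only [add_right_comm u 1, hf _]
  rw [l2ShiftSq, ← hper.setLIntegral_Ioc_comp_add_right one_pos b]
  simp only [add_add_sub_cancel]

theorem gagliardoSq_eq_lintegral_l2ShiftSq {f : ℝ → E} (hf : AEStronglyMeasurable f volume)
    (s : ℝ) :
    gagliardoSq s f = ∫⁻ w in Ioo (-(1:ℝ)/2) (1/2),
      l2ShiftSq f w / ENNReal.ofReal (|w| ^ (1 + 2 * s)) := by
  have hmeas : AEMeasurable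
      (fun p : ℝ × ℝ => ENNReal.ofReal (‖f (p.1 + p.2) - f p.1‖ ^ 2 / |p.2| ^ (1 + 2 * s)))
      ((volume.restrict (Ioc (0:ℝ) 1)).prod (volume.restrict (Ioo (-(1:ℝ)/2) (1/2)))) := by
    rw [Measure.prod_restrict]
    refine (ENNReal.measurable_ofReal.comp_aemeasurable ?_).restrict
    have hsum : AEStronglyMeasurable (fun p : ℝ × ℝ => f (p.1 + p.2)) (volume.prod volume) :=
      hf.comp_quasiMeasurePreserving (quasiMeasurePreserving_add volume volume)
    have hfst : AEStronglyMeasurable (fun p : ℝ × ℝ => f p.1) (volume.prod volume) :=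
      hf.comp_quasiMeasurePreserving Measure.quasiMeasurePreserving_fst
    exact ((hsum.sub hfst).norm.pow 2).aemeasurable.div (by fun_prop)
  have hinner : ∀ w, ∫⁻ u in Ioc (0:ℝ) 1,
      ENNReal.ofReal (‖f (u + w) - f u‖ ^ 2 / |w| ^ (1 + 2 * s))
        = l2ShiftSq f w / ENNReal.ofReal (|w| ^ (1 + 2 * s)) := fun w => by
    rcases eq_or_ne w 0 with rfl | hw
    · simp
    have hpos : 0 < |w| ^ (1 + 2 * s) := Real.rpow_pos_of_pos (abs_pos.2 hw) _
    simp_rw [ENNReal.ofReal_div_of_pos hpos, div_eq_mul_inv]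
    exact lintegral_mul_const' _ _ (ENNReal.inv_ne_top.2 (ENNReal.ofReal_pos.2 hpos).ne')
  rw [gagliardoSq, lintegral_lintegral_swap hmeas]
  exact lintegral_congr hinner

end L2Shift

theorem statement15_general {n : ℕ} {s : ℝ} {f : ℝ → Rn n}
    (hf : MemL2per f) :
    ∀ τ₁ ∈ Icc (0:ℝ) 1, ∀ τ₂ ∈ Icc (0:ℝ) 1,
      (∫⁻ w in Ioo (-(1:ℝ)/2) (1/2),
          (∫⁻ u in Ioc (0:ℝ) 1, ENNReal.ofReal (‖f (u + τ₁ * w) - f (u + τ₂ * w)‖ ^ 2)) /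
            ENNReal.ofReal (|w| ^ (1 + 2 * s)))
        ≤ ENNReal.ofReal (|τ₁ - τ₂| ^ (2 * s)) * gagliardoSq s f := by
  intro τ₁ hτ₁ τ₂ hτ₂
  have hτ : |τ₁ - τ₂| ≤ 1 :=
    abs_sub_le_iff.2 ⟨by linarith [hτ₁.2, hτ₂.1], by linarith [hτ₁.1, hτ₂.2]⟩
  simp_rw [lintegral_Ioc_norm_sub_sq_eq_l2ShiftSq hf.1, ← sub_mul]
  calc _ ≤ ENNReal.ofReal (|τ₁ - τ₂| ^ (1 + 2 * s - 1)) * ∫⁻ w in Ioo (-(1:ℝ)/2) (1/2),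
          l2ShiftSq f w / ENNReal.ofReal (|w| ^ (1 + 2 * s)) :=
        lintegral_comp_mul_div_rpow_le (l2ShiftSq_zero f) hτ _
    _ = ENNReal.ofReal (|τ₁ - τ₂| ^ (2 * s)) * gagliardoSq s f := by
        rw [add_sub_cancel_left, gagliardoSq_eq_lintegral_l2ShiftSq hf.2.1]

/-- For `s ∈ (0,1)` and `f ∈ L²(ℝ/ℤ,ℝⁿ)` with finite Gagliardo seminorm,
`∫_{−1/2}^{1/2} ‖f(·+τ₁w) − f(·+τ₂w)‖²_{L²} / |w|^{1+2s} dw ≤ |τ₁−τ₂|^{2s} [f]²_{H^{s,2}}`. -/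
theorem statement15 {n : ℕ} {s : ℝ} (hs : s ∈ Ioo (0:ℝ) 1) {f : ℝ → Rn n}
    (hf : MemL2per f) (hfin : gagliardoSq s f < ⊤) :
    ∀ τ₁ ∈ Icc (0:ℝ) 1, ∀ τ₂ ∈ Icc (0:ℝ) 1,
      (∫⁻ w in Ioo (-(1:ℝ)/2) (1/2),
          (∫⁻ u in Ioc (0:ℝ) 1, ENNReal.ofReal (‖f (u + τ₁ * w) - f (u + τ₂ * w)‖ ^ 2)) /
            ENNReal.ofReal (|w| ^ (1 + 2 * s)))
        ≤ ENNReal.ofReal (|τ₁ - τ₂| ^ (2 * s)) * gagliardoSq s f :=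
  statement15_general hf

end
end

section
/- Let n ≥ 1 and let γ ∈ C¹(ℝ/ℤ,ℝⁿ) be parametrized by arc-length, i.e. |γ'(u)| = 1 for all u. Then for all u ∈ ℝ/ℤ and all w ∈ ℝ: w² − |γ(u+w)−γ(u)|² = (w²/2)·∫₀¹∫₀¹ |γ'(u+τ₁w) − γ'(u+τ₂w)|² dτ₁ dτ₂. -/
/-!
The chord is `w` times the mean of `γ'` along the arc: `γ(u+w) − γ(u) = w ∫₀¹ γ'(u+τw) dτ`.
Expanding the square, the double integral `∫₀¹∫₀¹ |g(s) − g(t)|²` of any continuous `g` is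
`2 ∫₀¹ |g|² − 2 |∫₀¹ g|²` (twice its variance); for the unit vector field `g(τ) = γ'(u+τw)`
this is `2 − 2 |γ(u+w) − γ(u)|² / w²`.
-/

open MeasureTheory Filter Set
open scoped RealInnerProductSpace ENNReal Topology

noncomputable section

variable {n : ℕ}

theorem sub_eq_smul_integral_deriv_comp {E : Type*} [NormedAddCommGroup E] [NormedSpace ℝ E]
    [CompleteSpace E] {f : ℝ → E} (hf : ContDiff ℝ 1 f) (u w : ℝ) :
    f (u + w) - f u = w • ∫ τ in (0:ℝ)..1, deriv f (u + τ * w) := by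
  calc f (u + w) - f u = ∫ t in u..u + w, deriv f t :=
        (intervalIntegral.integral_deriv_eq_sub (fun t _ => hf.differentiable one_ne_zero t)
          ((hf.continuous_deriv le_rfl).intervalIntegrable _ _)).symm
    _ = w • ∫ τ in (0:ℝ)..1, deriv f (u + w * τ) := by
        rw [intervalIntegral.smul_integral_comp_add_mul, mul_zero, add_zero, mul_one]
    _ = w • ∫ τ in (0:ℝ)..1, deriv f (u + τ * w) := by simp_rw [mul_comm w]

theorem integral_integral_norm_sub_sq {E : Type*} [NormedAddCommGroup E] [InnerProductSpace ℝ E]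
    [CompleteSpace E] {g : ℝ → E} (hg : Continuous g) (a b : ℝ) :
    ∫ s in a..b, ∫ t in a..b, ‖g s - g t‖ ^ 2 =
      2 * (b - a) * (∫ s in a..b, ‖g s‖ ^ 2) - 2 * ‖∫ s in a..b, g s‖ ^ 2 := by
  set G := ∫ s in a..b, g s
  have hnorm : Continuous fun s => ‖g s‖ ^ 2 := by fun_prop
  have inner_integral (v : E) : ∫ t in a..b, ⟪v, g t⟫ = ⟪v, G⟫ :=
    (innerSL ℝ v).intervalIntegral_comp_comm (hg.intervalIntegrable a b)
  have integral_inner_left : ∫ s in a..b, ⟪g s, G⟫ = ‖G‖ ^ 2 := by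
    simp_rw [real_inner_comm G]
    rw [inner_integral, real_inner_self_eq_norm_sq]
  have integral_right (s : ℝ) : ∫ t in a..b, ‖g s - g t‖ ^ 2 =
      (b - a) * ‖g s‖ ^ 2 - 2 * ⟪g s, G⟫ + ∫ t in a..b, ‖g t‖ ^ 2 := by
    simp_rw [norm_sub_sq_real]
    rw [intervalIntegral.integral_add (Continuous.intervalIntegrable (by fun_prop) a b)
        (hnorm.intervalIntegrable a b),
      intervalIntegral.integral_sub intervalIntegrable_const
        ((continuous_const.inner hg).intervalIntegrable a b |>.const_mul 2),
      intervalIntegral.integral_const_mul, inner_integral, intervalIntegral.integral_const,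
      smul_eq_mul]
  simp_rw [integral_right]
  rw [intervalIntegral.integral_add (Continuous.intervalIntegrable (by fun_prop) a b)
      intervalIntegrable_const,
    intervalIntegral.integral_sub ((hnorm.intervalIntegrable a b).const_mul _)
      ((hg.inner continuous_const).intervalIntegrable a b |>.const_mul 2),
    intervalIntegral.integral_const_mul, intervalIntegral.integral_const_mul, integral_inner_left,
    intervalIntegral.integral_const, smul_eq_mul]
  ring

theorem statement18_general {n : ℕ} {γ : ℝ → Rn n}
    (hC1 : ContDiff ℝ 1 γ) (harc : ArcLengthParam γ)
    (u w : ℝ) :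
    w ^ 2 - ‖γ (u + w) - γ u‖ ^ 2 =
      w ^ 2 / 2 * ∫ τ₁ in (0:ℝ)..1, ∫ τ₂ in (0:ℝ)..1,
        ‖deriv γ (u + τ₁ * w) - deriv γ (u + τ₂ * w)‖ ^ 2 := by
  have hcont : Continuous fun τ => deriv γ (u + τ * w) :=
    (hC1.continuous_deriv le_rfl).comp (by fun_prop)
  have hunit : ∀ t, ‖deriv γ t‖ = 1 := harc
  rw [sub_eq_smul_integral_deriv_comp hC1 u w, norm_smul, Real.norm_eq_abs, mul_pow, sq_abs,
    integral_integral_norm_sub_sq hcont]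
  simp only [hunit, one_pow, intervalIntegral.integral_const, smul_eq_mul]
  ring

/-- For a `C¹` closed curve parametrized by arc-length,
`w² − |γ(u+w)−γ(u)|² = (w²/2)·∬_{[0,1]²} |γ'(u+τ₁w) − γ'(u+τ₂w)|² dτ₁ dτ₂`. -/
theorem statement18 {n : ℕ} (hn : 1 ≤ n) {γ : ℝ → Rn n}
    (hper : Function.Periodic γ 1) (hC1 : ContDiff ℝ 1 γ) (harc : ArcLengthParam γ)
    (u w : ℝ) :
    w ^ 2 - ‖γ (u + w) - γ u‖ ^ 2 =
      w ^ 2 / 2 * ∫ τ₁ in (0:ℝ)..1, ∫ τ₂ in (0:ℝ)..1,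
        ‖deriv γ (u + τ₁ * w) - deriv γ (u + τ₂ * w)‖ ^ 2 :=
  statement18_general hC1 harc u w

end
end
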